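/- Let N ≥ 4 be an even integer, τ ∈ ℍ, and set s_i := θ_i^{(N)}(1/(2N), τ) and θ_i(z) := θ_i^{(N)}(z, τ), with indices read modulo N. Then for every z ∈ ℂ: (a) for every integer j with 1 ≤ j ≤ N/2 − 1, s_j·s_{N−j}·θ_0(z)² + s_{N/2−j}·s_{N/2+j}·θ_{N/2}(z)² − s_{N/2}²·θ_{N/2−j}(z)·θ_{N/2+j}(z) = 0; and (b) for every integer j with 1 ≤ j ≤ N/2 − 2, s_{j+1}·s_{N−j}·θ_0(z)·θ_1(z) + s_{N/2−j}·s_{N/2+j+1}·θ_{N/2}(z)·θ_{N/2+1}(z) − s_{N/2}·s_{N/2+1}·θ_{N/2−j}(z)·θ_{N/2+j+1}(z) = 0. -/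
import Mathlib


open scoped UpperHalfPlane

/-- `e(x) = exp(2πix)`. -/
noncomputable def e (x : ℂ) : ℂ := Complex.exp (2 * Real.pi * Complex.I * x)

/-- The theta function with characteristic `(p, q)`:
`θ_{(p,q)}(z,τ) = ∑_{n ∈ ℤ} e((1/2)(n+p)²τ + (n+p)(z+q))`. -/
noncomputable def jtheta (p q : ℝ) (z τ : ℂ) : ℂ :=
  ∑' n : ℤ, e ((1 / 2 : ℂ) * ((n : ℂ) + p) ^ 2 * τ + ((n : ℂ) + p) * (z + q))

/-- `θ_k^{(N)}(z,τ) = θ_{(1/2 - k/N, N/2)}(Nz, Nτ)`. -/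
noncomputable def thetaN (N : ℕ) (k : ℝ) (z τ : ℂ) : ℂ :=
  jtheta (1 / 2 - k / N) (N / 2) (N * z) (N * τ)

/-- `θ_i^{(N)}(z,τ)` with integer index `i` (read modulo `N`). -/
noncomputable def thN (N : ℕ) (τ : ℍ) (i : ℤ) (z : ℂ) : ℂ := thetaN N (i : ℝ) z τ

/-- The theta null values `a_i = θ_i^{(N)}(0,τ)` with integer index `i` (read modulo `N`). -/
noncomputable def aN (N : ℕ) (τ : ℍ) (i : ℤ) : ℂ := thetaN N (i : ℝ) 0 τ

/-- The values `s_i = θ_i^{(N)}(1/(2N), τ)` with integer index `i` (read modulo `N`). -/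
noncomputable def sN (N : ℕ) (τ : ℍ) (i : ℤ) : ℂ := thetaN N (i : ℝ) (1 / (2 * N)) τ

/-! ### Auxiliary development -/

/-- The summand of the theta series, as a function of a real characteristic `p`,
an argument `w`, a parameter `τ` and the summation index `n`. -/
noncomputable def Fth (p : ℝ) (w τ : ℂ) (n : ℤ) : ℂ :=
  e ((1 / 2 : ℂ) * ((n : ℂ) + p) ^ 2 * τ + ((n : ℂ) + p) * w)

/-- `J p w τ = θ_{(p,0)}(w, τ)`. -/
noncomputable def J (p : ℝ) (w τ : ℂ) : ℂ := ∑' n : ℤ, Fth p w τ n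

lemma jtheta_eq (p q : ℝ) (z τ : ℂ) : jtheta p q z τ = J p (z + q) τ := rfl

lemma e_add (x y : ℂ) : e (x + y) = e x * e y := by
  rw [e, e, e, ← Complex.exp_add]; ring_nf

lemma e_int (k : ℤ) : e k = 1 := by
  rw [e, show 2 * (Real.pi : ℂ) * Complex.I * k = k * (2 * Real.pi * Complex.I) by ring,
    Complex.exp_int_mul_two_pi_mul_I]

lemma e_half : e (1 / 2) = -1 := by
  rw [e, show 2 * (Real.pi : ℂ) * Complex.I * (1 / 2) = Real.pi * Complex.I by ring,
    Complex.exp_pi_mul_I]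

lemma e_eq_one {x : ℂ} (k : ℤ) (h : x = k) : e x = 1 := by rw [h, e_int]

lemma e_eq_neg_one {x : ℂ} (k : ℤ) (h : x = k + 1 / 2) : e x = -1 := by
  rw [h, e_add, e_int, e_half, one_mul]

lemma Fth_shift (p : ℝ) (w τ : ℂ) (k n : ℤ) :
    Fth p (w + k) τ n = e (p * k) * Fth p w τ n := by
  have h : Fth p (w + k) τ n = e ((n * k : ℤ)) * (e ((p : ℂ) * k) * Fth p w τ n) := by
    simp only [Fth, e, ← Complex.exp_add]
    congr 1
    push_cast
    ring
  rw [h, e_int, one_mul]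

lemma J_shift (p : ℝ) (w τ : ℂ) (k : ℤ) : J p (w + k) τ = e (p * k) * J p w τ := by
  simp only [J, Fth_shift, tsum_mul_left]

lemma Fth_succ (p : ℝ) (w τ : ℂ) (n : ℤ) : Fth (p + 1) w τ n = Fth p w τ (n + 1) := by
  simp only [Fth]
  congr 2 <;> push_cast <;> ring

lemma J_succ (p : ℝ) (w τ : ℂ) : J (p + 1) w τ = J p w τ := by
  simp only [J, Fth_succ]
  exact (Equiv.addRight (1 : ℤ)).tsum_eq (Fth p w τ)

lemma Fth_neg (p : ℝ) (τ : ℂ) (n : ℤ) : Fth (-p) 0 τ n = Fth p 0 τ (-n) := by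
  simp only [Fth]
  congr 2 <;> push_cast <;> ring

lemma J_neg (p : ℝ) (τ : ℂ) : J (-p) 0 τ = J p 0 τ := by
  simp only [J, Fth_neg]
  exact (Equiv.neg ℤ).tsum_eq (Fth p 0 τ)

lemma J_half_sub (x : ℝ) (τ : ℂ) : J (1 / 2 - x) 0 τ = J (x + 1 / 2) 0 τ := by
  rw [show (1 / 2 - x : ℝ) = -(x - 1 / 2) by ring, J_neg,
    show (x + 1 / 2 : ℝ) = (x - 1 / 2) + 1 by ring, J_succ]

lemma J_one_sub (x : ℝ) (τ : ℂ) : J (1 - x) 0 τ = J x 0 τ := by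
  rw [show (1 - x : ℝ) = -x + 1 by ring, J_succ, J_neg]

lemma Fth_eq_jacobi (p : ℝ) (w τ : ℂ) (n : ℤ) :
    Fth p w τ n = e ((1 / 2 : ℂ) * p ^ 2 * τ + p * w) * jacobiTheta₂_term n (p * τ + w) τ := by
  simp only [Fth, e, jacobiTheta₂_term, ← Complex.exp_add]
  congr 1
  push_cast
  ring

lemma summable_norm_Fth (p : ℝ) (w τ : ℂ) (hτ : 0 < τ.im) :
    Summable fun n : ℤ => ‖Fth p w τ n‖ := by
  simp only [Fth_eq_jacobi, norm_mul]
  apply Summable.mul_left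
  refine (summable_pow_mul_jacobiTheta₂_term_bound |((p : ℂ) * τ + w).im| hτ 0).of_nonneg_of_le
    (fun n => norm_nonneg _) (fun n => ?_)
  simpa only [pow_zero, one_mul] using norm_jacobiTheta₂_term_le hτ le_rfl le_rfl n

/-- The reindexing `(ε, a, b) ↦ (a + b + ε, a - b)` of `ℤ × ℤ`. -/
noncomputable def sq2 : Bool × ℤ × ℤ ≃ ℤ × ℤ :=
  Equiv.ofBijective
    (fun x => (x.2.1 + x.2.2 + (if x.1 then 1 else 0), x.2.1 - x.2.2)) (by
      constructor
      · rintro ⟨ε, a, b⟩ ⟨ε', a', b'⟩ h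
        simp only [Prod.mk.injEq] at h
        cases ε <;> cases ε' <;> simp_all <;> omega
      · rintro ⟨m, n⟩
        rcases Int.even_or_odd (m + n) with ⟨t, ht⟩ | ⟨t, ht⟩
        · exact ⟨(false, t, m - t), by
            simp only [Prod.mk.injEq, Bool.false_eq_true, if_false]; exact ⟨by omega, by omega⟩⟩
        · exact ⟨(true, t, m - 1 - t), by
            simp only [Prod.mk.injEq, if_true]; exact ⟨by omega, by omega⟩⟩)

lemma sq2_apply (ε : Bool) (a b : ℤ) :
    sq2 (ε, a, b) = (a + b + (if ε then 1 else 0), a - b) := rfl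

lemma Fth_key0 (r s : ℝ) (w1 w2 τ : ℂ) (a b : ℤ) :
    Fth (r + s) w1 τ (a + b) * Fth (r - s) w2 τ (a - b)
      = Fth r (w1 + w2) (2 * τ) a * Fth s (w1 - w2) (2 * τ) b := by
  simp only [Fth, e, ← Complex.exp_add]
  congr 1
  push_cast
  ring

lemma Fth_key1 (r s : ℝ) (w1 w2 τ : ℂ) (a b : ℤ) :
    Fth (r + s) w1 τ (a + b + 1) * Fth (r - s) w2 τ (a - b)
      = Fth (r + 1 / 2) (w1 + w2) (2 * τ) a * Fth (s + 1 / 2) (w1 - w2) (2 * τ) b := by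
  simp only [Fth, e, ← Complex.exp_add]
  congr 1
  push_cast
  ring

/-- The three-term splitting of a product of two theta series. -/
lemma J_mul_J {τ : ℂ} (hτ : 0 < τ.im) (r s : ℝ) (W V : ℂ) (k : ℤ) (hW : W + W = V + k) :
    J (r + s) W τ * J (r - s) W τ
      = e ((r : ℝ) * (k : ℂ)) * J r V (2 * τ) * J s 0 (2 * τ)
        + e (((r + 1 / 2 : ℝ) : ℂ) * (k : ℂ)) * J (r + 1 / 2) V (2 * τ)
            * J (s + 1 / 2) 0 (2 * τ) := by
  have h2τ : 0 < (2 * τ).im := by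
    have h : (2 * τ).im = 2 * τ.im := by simp [Complex.mul_im]
    rw [h]; linarith
  have h1 := summable_norm_Fth (r + s) W τ hτ
  have h2 := summable_norm_Fth (r - s) W τ hτ
  set f : ℤ × ℤ → ℂ := fun z => Fth (r + s) W τ z.1 * Fth (r - s) W τ z.2 with hfdef
  have hf : Summable f := summable_mul_of_summable_norm h1 h2
  have hfe : Summable (f ∘ sq2) := (Equiv.summable_iff sq2).mpr hf
  have step1 : J (r + s) W τ * J (r - s) W τ = ∑' z : ℤ × ℤ, f z :=
    tsum_mul_tsum_of_summable_norm h1 h2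
  have step2 : ∑' z : ℤ × ℤ, f z = ∑' x : Bool × ℤ × ℤ, f (sq2 x) :=
    (sq2.tsum_eq f).symm
  have step3 : ∑' x : Bool × ℤ × ℤ, f (sq2 x)
      = ∑' (ε : Bool), ∑' (c : ℤ × ℤ), f (sq2 (ε, c)) :=
    Summable.tsum_prod' hfe fun ε => hfe.prod_factor ε
  have hfib0 : ∑' c : ℤ × ℤ, f (sq2 (false, c))
      = J r (W + W) (2 * τ) * J s 0 (2 * τ) := by
    have h : (fun c : ℤ × ℤ => f (sq2 (false, c)))
        = fun c : ℤ × ℤ => Fth r (W + W) (2 * τ) c.1 * Fth s 0 (2 * τ) c.2 := by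
      funext c
      obtain ⟨a, b⟩ := c
      have h := Fth_key0 r s W W τ a b
      rw [sub_self] at h
      simpa [hfdef, sq2_apply] using h
    rw [h]
    exact (tsum_mul_tsum_of_summable_norm (summable_norm_Fth _ _ _ h2τ)
      (summable_norm_Fth _ _ _ h2τ)).symm
  have hfib1 : ∑' c : ℤ × ℤ, f (sq2 (true, c))
      = J (r + 1 / 2) (W + W) (2 * τ) * J (s + 1 / 2) 0 (2 * τ) := by
    have h : (fun c : ℤ × ℤ => f (sq2 (true, c)))
        = fun c : ℤ × ℤ => Fth (r + 1 / 2) (W + W) (2 * τ) c.1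
            * Fth (s + 1 / 2) 0 (2 * τ) c.2 := by
      funext c
      obtain ⟨a, b⟩ := c
      have h := Fth_key1 r s W W τ a b
      rw [sub_self] at h
      simpa [hfdef, sq2_apply] using h
    rw [h]
    exact (tsum_mul_tsum_of_summable_norm (summable_norm_Fth _ _ _ h2τ)
      (summable_norm_Fth _ _ _ h2τ)).symm
  rw [step1, step2, step3, tsum_bool, hfib0, hfib1, hW, J_shift, J_shift]

/-- Core computation for part (a). -/
lemma core_a (τ1 : ℂ) (ht : 0 < τ1.im) (x : ℝ) (W U V : ℂ) (k m : ℤ)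
    (hk : k = m + m)
    (hW : W + W = (0 : ℂ) + ((k + 1 : ℤ) : ℂ))
    (hU : U + U = V + ((k : ℤ) : ℂ)) :
    (J (1 / 2 - x) W τ1 * J (x - 1 / 2) W τ1) * (J (1 / 2) U τ1 * J (1 / 2) U τ1)
      + (J x W τ1 * J (-x) W τ1) * (J 0 U τ1 * J 0 U τ1)
      - J 0 W τ1 * J 0 W τ1 * (J x U τ1 * J (-x) U τ1) = 0 := by
  have h1 := J_mul_J ht 0 (1 / 2 - x) W 0 (k + 1) hW
  have h2 := J_mul_J ht (1 / 2) 0 U V k hU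
  have h3 := J_mul_J ht 0 x W 0 (k + 1) hW
  have h4 := J_mul_J ht 0 0 U V k hU
  have h5 := J_mul_J ht 0 0 W 0 (k + 1) hW
  have h6 := J_mul_J ht 0 x U V k hU
  simp only [zero_add, zero_sub, add_zero, sub_zero, neg_sub] at h1 h2 h3 h4 h5 h6
  have hcA : e (((0 : ℝ) : ℂ) * ((k + 1 : ℤ) : ℂ)) = 1 := e_eq_one 0 (by push_cast; ring)
  have hcB : e (((1 / 2 : ℝ) : ℂ) * ((k + 1 : ℤ) : ℂ)) = -1 :=
    e_eq_neg_one m (by push_cast [hk]; ring)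
  have hcC : e (((1 / 2 : ℝ) : ℂ) * ((k : ℤ) : ℂ)) = 1 := e_eq_one m (by push_cast [hk]; ring)
  have hcD : e (((1 / 2 + 1 / 2 : ℝ) : ℂ) * ((k : ℤ) : ℂ)) = 1 := e_eq_one k (by push_cast; ring)
  have hcE : e (((0 : ℝ) : ℂ) * ((k : ℤ) : ℂ)) = 1 := e_eq_one 0 (by push_cast; ring)
  rw [hcA, hcB] at h1 h3 h5
  rw [hcC, hcD] at h2
  rw [hcE, hcC] at h4 h6
  rw [show (1 / 2 + 1 / 2 : ℝ) = (0 : ℝ) + 1 by norm_num, J_succ] at h2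
  rw [J_half_sub] at h1
  rw [show (1 / 2 - x + 1 / 2 : ℝ) = 1 - x by ring, J_one_sub] at h1
  rw [h1, h2, h3, h4, h5, h6]
  ring

/-- Core computation for part (b). -/
lemma core_b (τ1 : ℂ) (ht : 0 < τ1.im) (x y : ℝ) (W U V : ℂ) (k m : ℤ)
    (hk : k = m + m) (hyk : y * (k : ℝ) = 1 / 2)
    (hW : W + W = (0 : ℂ) + ((k + 1 : ℤ) : ℂ))
    (hU : U + U = V + ((k : ℤ) : ℂ)) :
    (J (-y + (1 / 2 - (x + y))) W τ1 * J (-y - (1 / 2 - (x + y))) W τ1)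
        * (J ((1 / 2 - y) + y) U τ1 * J ((1 / 2 - y) - y) U τ1)
      + (J (-y + (x + y)) W τ1 * J (-y - (x + y)) W τ1)
        * (J (-y + y) U τ1 * J (-y - y) U τ1)
      - (J (-y + y) W τ1 * J (-y - y) W τ1)
        * (J (-y + (x + y)) U τ1 * J (-y - (x + y)) U τ1) = 0 := by
  have hykC : ((y : ℝ) : ℂ) * ((k : ℤ) : ℂ) = 1 / 2 := by
    have h := congrArg (fun t : ℝ => (t : ℂ)) hyk
    push_cast at h
    exact h
  have h1 := J_mul_J ht (-y) (1 / 2 - (x + y)) W 0 (k + 1) hW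
  have h2 := J_mul_J ht (1 / 2 - y) y U V k hU
  have h3 := J_mul_J ht (-y) (x + y) W 0 (k + 1) hW
  have h4 := J_mul_J ht (-y) y U V k hU
  have h5 := J_mul_J ht (-y) y W 0 (k + 1) hW
  have h6 := J_mul_J ht (-y) (x + y) U V k hU
  have hc2 : e (((-y + 1 / 2 : ℝ) : ℂ) * ((k + 1 : ℤ) : ℂ))
      = -e (((-y : ℝ) : ℂ) * ((k + 1 : ℤ) : ℂ)) := by
    have harg : ((-y + 1 / 2 : ℝ) : ℂ) * ((k + 1 : ℤ) : ℂ)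
        = ((-y : ℝ) : ℂ) * ((k + 1 : ℤ) : ℂ) + (((m : ℤ) : ℂ) + 1 / 2) := by
      push_cast [hk]; ring
    rw [harg, e_add, e_eq_neg_one m rfl, mul_neg_one]
  have hc3 : e (((1 / 2 - y : ℝ) : ℂ) * ((k : ℤ) : ℂ)) = -1 := by
    refine e_eq_neg_one (m - 1) ?_
    have h := hykC
    push_cast [hk] at h ⊢
    linear_combination -h
  have hc4 : e ((((1 / 2 - y) + 1 / 2 : ℝ) : ℂ) * ((k : ℤ) : ℂ)) = -1 := by
    refine e_eq_neg_one (k - 1) ?_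
    have h := hykC
    push_cast at h ⊢
    linear_combination -h
  have hc5 : e (((-y : ℝ) : ℂ) * ((k : ℤ) : ℂ)) = -1 := by
    refine e_eq_neg_one (-1) ?_
    have h := hykC
    push_cast at h ⊢
    linear_combination -h
  have hc6 : e (((-y + 1 / 2 : ℝ) : ℂ) * ((k : ℤ) : ℂ)) = -1 := by
    refine e_eq_neg_one (m - 1) ?_
    have h := hykC
    push_cast [hk] at h ⊢
    linear_combination -h
  rw [hc2] at h1 h3 h5
  rw [hc3, hc4] at h2
  rw [hc5, hc6] at h4 h6
  rw [J_neg] at h1 h3 h5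
  rw [show (-y + 1 / 2 : ℝ) = 1 / 2 - y from by ring] at h1 h3 h4 h5 h6
  rw [J_half_sub, J_half_sub] at h1
  rw [J_half_sub] at h3
  rw [J_half_sub] at h5
  rw [show (1 / 2 - (x + y) + 1 / 2 : ℝ) = 1 - (x + y) from by ring, J_one_sub] at h1
  rw [show ((1 / 2 - y) + 1 / 2 : ℝ) = -y + 1 from by ring, J_succ] at h2
  rw [h1, h2, h3, h4, h5, h6]
  ring

/-- Theorem 7.9: quadratic relations for even `N` coming from the three-term identity. -/
theorem quadratic_relations_even_s (N : ℕ) (hN : 4 ≤ N) (heven : Even N) (τ : ℍ) (z : ℂ) :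
    (∀ j : ℤ, 1 ≤ j → j ≤ (N : ℤ) / 2 - 1 →
      sN N τ j * sN N τ ((N : ℤ) - j) * thN N τ 0 z ^ 2
        + sN N τ ((N : ℤ) / 2 - j) * sN N τ ((N : ℤ) / 2 + j) * thN N τ ((N : ℤ) / 2) z ^ 2
        - sN N τ ((N : ℤ) / 2) ^ 2 * thN N τ ((N : ℤ) / 2 - j) z * thN N τ ((N : ℤ) / 2 + j) z
        = 0) ∧
    (∀ j : ℤ, 1 ≤ j → j ≤ (N : ℤ) / 2 - 2 →
      sN N τ (j + 1) * sN N τ ((N : ℤ) - j) * thN N τ 0 z * thN N τ 1 z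
        + sN N τ ((N : ℤ) / 2 - j) * sN N τ ((N : ℤ) / 2 + j + 1) *
            thN N τ ((N : ℤ) / 2) z * thN N τ ((N : ℤ) / 2 + 1) z
        - sN N τ ((N : ℤ) / 2) * sN N τ ((N : ℤ) / 2 + 1) *
            thN N τ ((N : ℤ) / 2 - j) z * thN N τ ((N : ℤ) / 2 + j + 1) z = 0) := by
  obtain ⟨m, hm⟩ := heven
  have hNR : (N : ℝ) ≠ 0 := Nat.cast_ne_zero.mpr (by omega)
  have hmR : (m : ℝ) ≠ 0 := Nat.cast_ne_zero.mpr (by omega)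
  have hNC : (N : ℂ) ≠ 0 := Nat.cast_ne_zero.mpr (by omega)
  have hNm : ((N : ℤ) / 2) = (m : ℤ) := by omega
  have hk : ((N : ℤ)) = (m : ℤ) + (m : ℤ) := by exact_mod_cast hm
  have ht1 : 0 < ((N : ℂ) * (τ : ℂ)).im := by
    have h : ((N : ℂ) * (τ : ℂ)).im = N * (τ : ℂ).im := by simp [Complex.mul_im]
    rw [h]
    have hN0 : (0 : ℝ) < N := by exact_mod_cast (by omega : 0 < N)
    exact mul_pos hN0 τ.2
  have hsN : ∀ i : ℤ, ∀ p : ℝ, 1 / 2 - (i : ℝ) / (N : ℝ) = p →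
      sN N τ i = J p ((1 / 2 : ℂ) + (N : ℂ) / 2) ((N : ℂ) * (τ : ℂ)) := by
    intro i p hp
    rw [sN, thetaN, jtheta_eq, hp]
    exact congrArg (fun w => J p w ((N : ℂ) * (τ : ℂ))) (by push_cast; field_simp; all_goals ring)
  have hthN : ∀ i : ℤ, ∀ p : ℝ, 1 / 2 - (i : ℝ) / (N : ℝ) = p →
      thN N τ i z = J p ((N : ℂ) * z + (N : ℂ) / 2) ((N : ℂ) * (τ : ℂ)) := by
    intro i p hp
    rw [thN, thetaN, jtheta_eq, hp]
    exact congrArg (fun w => J p w ((N : ℂ) * (τ : ℂ))) (by push_cast; ring)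
  have hW : ((1 / 2 : ℂ) + (N : ℂ) / 2) + ((1 / 2 : ℂ) + (N : ℂ) / 2)
      = (0 : ℂ) + (((N : ℤ) + 1 : ℤ) : ℂ) := by push_cast; ring
  have hU : ((N : ℂ) * z + (N : ℂ) / 2) + ((N : ℂ) * z + (N : ℂ) / 2)
      = ((N : ℂ) * z + (N : ℂ) * z) + (((N : ℤ) : ℤ) : ℂ) := by push_cast; ring
  constructor
  · intro j hj1 hj2
    rw [pow_two, pow_two, pow_two,
      hsN j (1 / 2 - (j : ℝ) / (N : ℝ)) rfl,
      hsN ((N : ℤ) - j) ((j : ℝ) / (N : ℝ) - 1 / 2) (by push_cast; field_simp; all_goals ring),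
      hthN 0 (1 / 2) (by norm_num),
      hsN ((N : ℤ) / 2 - j) ((j : ℝ) / (N : ℝ)) (by
        rw [hNm]; push_cast [hm]; field_simp; all_goals ring),
      hsN ((N : ℤ) / 2 + j) (-((j : ℝ) / (N : ℝ))) (by
        rw [hNm]; push_cast [hm]; field_simp; all_goals ring),
      hthN ((N : ℤ) / 2) 0 (by rw [hNm]; push_cast [hm]; field_simp; all_goals ring),
      hsN ((N : ℤ) / 2) 0 (by rw [hNm]; push_cast [hm]; field_simp; all_goals ring),
      hthN ((N : ℤ) / 2 - j) ((j : ℝ) / (N : ℝ)) (by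
        rw [hNm]; push_cast [hm]; field_simp; all_goals ring),
      hthN ((N : ℤ) / 2 + j) (-((j : ℝ) / (N : ℝ))) (by
        rw [hNm]; push_cast [hm]; field_simp; all_goals ring)]
    linear_combination core_a ((N : ℂ) * (τ : ℂ)) ht1 ((j : ℝ) / (N : ℝ))
      ((1 / 2 : ℂ) + (N : ℂ) / 2) ((N : ℂ) * z + (N : ℂ) / 2) ((N : ℂ) * z + (N : ℂ) * z)
      (N : ℤ) (m : ℤ) hk hW hU
  · intro j hj1 hj2
    rw [hsN (j + 1)
        (-(1 / (2 * (N : ℝ))) + (1 / 2 - ((j : ℝ) / (N : ℝ) + 1 / (2 * (N : ℝ)))))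
        (by push_cast; field_simp; all_goals ring),
      hsN ((N : ℤ) - j)
        (-(1 / (2 * (N : ℝ))) - (1 / 2 - ((j : ℝ) / (N : ℝ) + 1 / (2 * (N : ℝ)))))
        (by push_cast; field_simp; all_goals ring),
      hthN 0 ((1 / 2 - 1 / (2 * (N : ℝ))) + 1 / (2 * (N : ℝ))) (by push_cast; ring),
      hthN 1 ((1 / 2 - 1 / (2 * (N : ℝ))) - 1 / (2 * (N : ℝ))) (by push_cast; field_simp; all_goals ring),
      hsN ((N : ℤ) / 2 - j)
        (-(1 / (2 * (N : ℝ))) + ((j : ℝ) / (N : ℝ) + 1 / (2 * (N : ℝ))))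
        (by rw [hNm]; push_cast [hm]; field_simp; all_goals ring),
      hsN ((N : ℤ) / 2 + j + 1)
        (-(1 / (2 * (N : ℝ))) - ((j : ℝ) / (N : ℝ) + 1 / (2 * (N : ℝ))))
        (by rw [hNm]; push_cast [hm]; field_simp; all_goals ring),
      hthN ((N : ℤ) / 2) (-(1 / (2 * (N : ℝ))) + 1 / (2 * (N : ℝ)))
        (by rw [hNm]; push_cast [hm]; field_simp; all_goals ring),
      hthN ((N : ℤ) / 2 + 1) (-(1 / (2 * (N : ℝ))) - 1 / (2 * (N : ℝ)))
        (by rw [hNm]; push_cast [hm]; field_simp; all_goals ring),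
      hsN ((N : ℤ) / 2) (-(1 / (2 * (N : ℝ))) + 1 / (2 * (N : ℝ)))
        (by rw [hNm]; push_cast [hm]; field_simp; all_goals ring),
      hsN ((N : ℤ) / 2 + 1) (-(1 / (2 * (N : ℝ))) - 1 / (2 * (N : ℝ)))
        (by rw [hNm]; push_cast [hm]; field_simp; all_goals ring),
      hthN ((N : ℤ) / 2 - j)
        (-(1 / (2 * (N : ℝ))) + ((j : ℝ) / (N : ℝ) + 1 / (2 * (N : ℝ))))
        (by rw [hNm]; push_cast [hm]; field_simp; all_goals ring),
      hthN ((N : ℤ) / 2 + j + 1)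
        (-(1 / (2 * (N : ℝ))) - ((j : ℝ) / (N : ℝ) + 1 / (2 * (N : ℝ))))
        (by rw [hNm]; push_cast [hm]; field_simp; all_goals ring)]
    have hyk : (1 / (2 * (N : ℝ))) * (((N : ℤ) : ℤ) : ℝ) = 1 / 2 := by
      push_cast; field_simp; all_goals ring
    linear_combination core_b ((N : ℂ) * (τ : ℂ)) ht1 ((j : ℝ) / (N : ℝ)) (1 / (2 * (N : ℝ)))
      ((1 / 2 : ℂ) + (N : ℂ) / 2) ((N : ℂ) * z + (N : ℂ) / 2) ((N : ℂ) * z + (N : ℂ) * z)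
      (N : ℤ) (m : ℤ) hk hyk hW hU
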